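/- Let F = [[0, I], [−G_p, −G_d]] be a 2n×2n block matrix where G_p and G_d are symmetric positive definite n×n matrices that commute. Then F is Hurwitz: every eigenvalue of F has negative real part. -/

import Mathlib

/-!
An eigenvector of `F` for `μ` has the form `(x, μ x)` with `x ≠ 0` and
`(μ² + μ G_d + G_p) x = 0`. Pairing with `x̄` gives `a μ² + b μ + c = 0` where `a = x̄ᵀx`,
`b = x̄ᵀ G_d x` and `c = x̄ᵀ G_p x` are positive reals, because a real positive definite matrix
stays positive definite over `ℂ`. A quadratic with positive real coefficients has all its roots
in the open left half-plane.
-/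

open Matrix Polynomial

open scoped ComplexOrder

section

variable {n : Type*} [Fintype n]

theorem Matrix.IsSymm.dotProduct_mulVec_comm {R : Type*} [CommSemiring R] {M : Matrix n n R}
    (hM : M.IsSymm) (u w : n → R) : u ⬝ᵥ M *ᵥ w = w ⬝ᵥ M *ᵥ u := by
  rw [dotProduct_mulVec, ← mulVec_transpose, hM.eq, dotProduct_comm]

theorem Matrix.IsSymm.star_dotProduct_map_ofReal_mulVec {M : Matrix n n ℝ} (hM : M.IsSymm)
    (x : n → ℂ) :
    star x ⬝ᵥ M.map (↑) *ᵥ x =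
      (((fun i => (x i).re) ⬝ᵥ M *ᵥ (fun i => (x i).re) +
        (fun i => (x i).im) ⬝ᵥ M *ᵥ (fun i => (x i).im) : ℝ) : ℂ) := by
  set a : n → ℝ := fun i => (x i).re
  set b : n → ℝ := fun i => (x i).im
  have hx : x = Complex.ofReal ∘ a + Complex.I • (Complex.ofReal ∘ b) := by
    funext i; simp [a, b, Complex.ext_iff]
  have hs : star x = Complex.ofReal ∘ a - Complex.I • (Complex.ofReal ∘ b) := by
    funext i; simp [a, b, Complex.ext_iff]
  have hMv (v : n → ℝ) : M.map (↑) *ᵥ (Complex.ofReal ∘ v) = Complex.ofReal ∘ (M *ᵥ v) :=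
    funext fun i => (RingHom.map_mulVec Complex.ofRealHom M v i).symm
  have hdot (u w : n → ℝ) : (Complex.ofReal ∘ u) ⬝ᵥ (Complex.ofReal ∘ w) = ↑(u ⬝ᵥ w) :=
    (RingHom.map_dotProduct Complex.ofRealHom u w).symm
  rw [hs, hx]
  simp only [mulVec_add, mulVec_smul, sub_dotProduct, dotProduct_add, smul_dotProduct,
    dotProduct_smul, hMv, hdot, hM.dotProduct_mulVec_comm a b, smul_eq_mul]
  push_cast
  ring_nf
  rw [Complex.I_sq]
  ring

theorem Matrix.PosDef.map_ofReal {M : Matrix n n ℝ} (hM : M.PosDef) :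
    (M.map ((↑) : ℝ → ℂ)).PosDef := by
  have hsymm : M.IsSymm := (conjTranspose_eq_transpose_of_trivial M).symm.trans hM.isHermitian.eq
  refine .of_dotProduct_mulVec_pos (hM.isHermitian.map _ fun _ => (Complex.conj_ofReal _).symm)
    fun x hx => ?_
  rw [hsymm.star_dotProduct_map_ofReal_mulVec, Complex.zero_lt_real]
  have hpos {u : n → ℝ} (hu : u ≠ 0) : 0 < u ⬝ᵥ M *ᵥ u := by
    simpa using hM.dotProduct_mulVec_pos hu
  have hnonneg (u : n → ℝ) : 0 ≤ u ⬝ᵥ M *ᵥ u := by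
    simpa using hM.posSemidef.dotProduct_mulVec_nonneg u
  by_cases hre : (fun i => (x i).re) = 0
  · have him : (fun i => (x i).im) ≠ 0 := fun him =>
      hx <| funext fun i => Complex.ext (congrFun hre i) (congrFun him i)
    exact add_pos_of_nonneg_of_pos (hnonneg _) (hpos him)
  · exact add_pos_of_pos_of_nonneg (hpos hre) (hnonneg _)

end

theorem Complex.re_neg_of_quadratic_eq_zero {a b c z : ℂ} (ha : 0 < a) (hb : 0 < b) (hc : 0 < c)
    (h : a * z ^ 2 + b * z + c = 0) : z.re < 0 := by
  obtain ⟨a, rfl⟩ : ∃ r : ℝ, (r : ℂ) = a := ⟨a.re, (eq_re_of_ofReal_le ha.le).symm⟩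
  obtain ⟨b, rfl⟩ : ∃ r : ℝ, (r : ℂ) = b := ⟨b.re, (eq_re_of_ofReal_le hb.le).symm⟩
  obtain ⟨c, rfl⟩ : ∃ r : ℝ, (r : ℂ) = c := ⟨c.re, (eq_re_of_ofReal_le hc.le).symm⟩
  rw [zero_lt_real] at ha hb hc
  have hre := congrArg re h
  have him := congrArg im h
  simp only [add_re, add_im, mul_re, mul_im, pow_two, ofReal_re, ofReal_im, zero_re,
    zero_im] at hre him
  by_contra! hz
  have hzim : z.im = 0 := by
    have : z.im * (2 * a * z.re + b) = 0 := by linarith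
    exact (mul_eq_zero.mp this).resolve_right (by positivity)
  rw [hzim] at hre
  nlinarith [mul_nonneg (mul_nonneg ha.le hz) hz, mul_nonneg hb.le hz]

section

variable {m : Type*} [Fintype m] [DecidableEq m]

theorem Matrix.exists_mulVec_eq_smul_of_isRoot_charpoly {R : Type*} [CommRing R] [IsDomain R]
    {M : Matrix m m R} {μ : R} (h : M.charpoly.IsRoot μ) : ∃ v ≠ 0, M *ᵥ v = μ • v := by
  rw [IsRoot, eval_charpoly, ← exists_mulVec_eq_zero_iff] at h
  obtain ⟨v, hv, hMv⟩ := h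
  refine ⟨v, hv, ?_⟩
  rw [sub_mulVec, scalar_apply, ← smul_one_eq_diagonal, smul_mulVec, one_mulVec,
    sub_eq_zero] at hMv
  exact hMv.symm

theorem Matrix.exists_mulVec_eq_zero_of_isRoot_charpoly_fromBlocks {R : Type*} [CommRing R]
    [IsDomain R] {P D : Matrix m m R} {μ : R}
    (h : (fromBlocks 0 1 (-P) (-D)).charpoly.IsRoot μ) :
    ∃ x ≠ 0, (μ ^ 2 • 1 + μ • D + P) *ᵥ x = 0 := by
  obtain ⟨v, hv, hFv⟩ := exists_mulVec_eq_smul_of_isRoot_charpoly h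
  obtain ⟨x, y, rfl⟩ : ∃ x y, v = Sum.elim x y := ⟨_, _, (Sum.elim_comp_inl_inr v).symm⟩
  simp only [fromBlocks_mulVec, Sum.elim_comp_inl, Sum.elim_comp_inr, zero_mulVec, one_mulVec,
    zero_add, neg_mulVec] at hFv
  have hy : y = μ • x := funext fun i => by simpa using congrFun hFv (.inl i)
  have hPD : -(P *ᵥ x) + -(D *ᵥ y) = μ • y := funext fun i => by simpa using congrFun hFv (.inr i)
  refine ⟨x, fun hx => hv ?_, ?_⟩
  · rw [hy, hx, smul_zero, Sum.elim_zero_zero]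
  · rw [hy, mulVec_smul] at hPD
    rw [add_mulVec, add_mulVec, smul_mulVec, smul_mulVec, one_mulVec]
    linear_combination (norm := module) -hPD

end

theorem block_companion_hurwitz_general {n : ℕ}
    (Gp Gd : Matrix (Fin n) (Fin n) ℝ)
    (hGp : Gp.PosDef) (hGd : Gd.PosDef) :
    let F : Matrix (Fin n ⊕ Fin n) (Fin n ⊕ Fin n) ℝ :=
      Matrix.fromBlocks 0 1 (-Gp) (-Gd)
    ∀ μ : ℂ, ((F.map (Complex.ofReal)).charpoly).IsRoot μ → μ.re < 0 := by
  intro F μ hμ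
  have hF : F.map Complex.ofReal = fromBlocks 0 1 (-Gp.map (↑)) (-Gd.map (↑)) := by
    simp [F, fromBlocks_map, Matrix.map_neg _ Complex.ofReal_neg]
  rw [hF] at hμ
  obtain ⟨x, hx, hquad⟩ := exists_mulVec_eq_zero_of_isRoot_charpoly_fromBlocks hμ
  have hform := congrArg (star x ⬝ᵥ ·) hquad
  simp only [add_mulVec, smul_mulVec, dotProduct_add, dotProduct_smul, smul_eq_mul,
    dotProduct_zero] at hform
  exact Complex.re_neg_of_quadratic_eq_zero (PosDef.one.dotProduct_mulVec_pos hx)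
    (hGd.map_ofReal.dotProduct_mulVec_pos hx) (hGp.map_ofReal.dotProduct_mulVec_pos hx)
    (by linear_combination hform)

theorem block_companion_hurwitz {n : ℕ}
    (Gp Gd : Matrix (Fin n) (Fin n) ℝ)
    (hGp : Gp.PosDef) (hGd : Gd.PosDef) (hcomm : Gp * Gd = Gd * Gp) :
    let F : Matrix (Fin n ⊕ Fin n) (Fin n ⊕ Fin n) ℝ :=
      Matrix.fromBlocks 0 1 (-Gp) (-Gd)
    ∀ μ : ℂ, ((F.map (Complex.ofReal)).charpoly).IsRoot μ → μ.re < 0 :=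
  block_companion_hurwitz_general Gp Gd hGp hGd
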